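/- arXiv:2004.01969 — 2 statements merged into one kernel-verified Lean document; each statement's English description precedes it below -/
import Mathlib

section
/- Let Q∞, Q(k), Q^{ML} be symmetric positive definite matrices satisfying Q(k) ≥ Q∞ (monotone limit), Q(k) - Q∞ ≤ α ρ^{k-1} Q∞, and Q(d) - Q^{ML} ≤ ᾱ ρ̄^{d-1} Q^{ML} with Q(d) ≥ Q^{ML}. Then -(α ρ^{d-1}/(1 + α ρ^{d-1})) Q^{ML} ≤ Q∞ - Q^{ML} ≤ ᾱ ρ̄^{d-1} Q^{ML} (Corollary 2 structure). -/
/-!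
Both bounds come from comparing each matrix with `Q(d)`: from `Q^ML ≤ Q(d) ≤ (1 + c) Q∞`, with
`c = α ρ^(d-1)`, one gets `Q^ML / (1 + c) ≤ Q∞`, which is the lower bound since
`1 / (1 + c) - 1 = -c / (1 + c)`; the upper bound is `Q∞ - Q^ML ≤ Q(d) - Q^ML`.
-/

open Matrix

section OrderedModule

variable {𝕜 M : Type*} [Field 𝕜] [LinearOrder 𝕜] [IsStrictOrderedRing 𝕜]
  [AddCommGroup M] [PartialOrder M] [IsOrderedAddMonoid M] [Module 𝕜 M] [PosSMulMono 𝕜 M]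

theorem inv_one_add_smul_le_of_sub_le_smul {q r : M} {c : 𝕜} (hc : 0 ≤ c)
    (h : r - q ≤ c • q) : (1 + c)⁻¹ • r ≤ q := by
  have hc' : (1 + c) ≠ 0 := by positivity
  have hr : r ≤ (1 + c) • q := by
    rw [add_smul, one_smul]
    exact sub_le_iff_le_add'.mp h
  calc (1 + c)⁻¹ • r ≤ (1 + c)⁻¹ • (1 + c) • q :=
        smul_le_smul_of_nonneg_left hr (by positivity)
    _ = q := inv_smul_smul₀ hc' q

theorem neg_div_one_add_smul_le_sub {q qd q' : M} {c : 𝕜} (hc : 0 ≤ c)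
    (hq : qd - q ≤ c • q) (hq' : q' ≤ qd) : -(c / (1 + c)) • q' ≤ q - q' := by
  have hc' : (1 + c) ≠ 0 := by positivity
  have hcoeff : -(c / (1 + c)) = (1 + c)⁻¹ - 1 := by field_simp; ring
  rw [hcoeff, sub_smul, one_smul]
  exact sub_le_sub_right
    (inv_one_add_smul_le_of_sub_le_smul hc ((sub_le_sub_right hq' q).trans hq)) q'

end OrderedModule

open scoped MatrixOrder

theorem stmt_4_general {n : ℕ} (Qinf Qd QML : Matrix (Fin n) (Fin n) ℝ)
    (α αbar ρ ρbar : ℝ) (d : ℕ)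
    (hα : 0 < α) (hρ : 0 < ρ)
    (h1 : (Qd - Qinf).PosSemidef)
    (h2 : ((α * ρ ^ (d - 1)) • Qinf - (Qd - Qinf)).PosSemidef)
    (h3 : (Qd - QML).PosSemidef)
    (h4 : ((αbar * ρbar ^ (d - 1)) • QML - (Qd - QML)).PosSemidef) :
    ((Qinf - QML) - (-(α * ρ ^ (d - 1) / (1 + α * ρ ^ (d - 1)))) • QML).PosSemidef ∧
      ((αbar * ρbar ^ (d - 1)) • QML - (Qinf - QML)).PosSemidef := by
  simp only [← le_iff] at h1 h2 h3 h4 ⊢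
  exact ⟨neg_div_one_add_smul_le_sub (by positivity) h2 h3, (sub_le_sub_right h1 QML).trans h4⟩

/-- Corollary 2 structure: from `Q(d) ≥ Q∞`, `Q(d) - Q∞ ≤ α ρ^(d-1) Q∞`,
`0 ≤ Q(d) - Q^ML ≤ ᾱ ρ̄^(d-1) Q^ML`, one gets
`-(α ρ^(d-1)/(1 + α ρ^(d-1))) Q^ML ≤ Q∞ - Q^ML ≤ ᾱ ρ̄^(d-1) Q^ML`. -/
theorem stmt_4 {n : ℕ} (Qinf Qd QML : Matrix (Fin n) (Fin n) ℝ)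
    (α αbar ρ ρbar : ℝ) (d : ℕ)
    (hQinf : Qinf.PosDef) (hQd : Qd.PosDef) (hQML : QML.PosDef)
    (hα : 0 < α) (hαbar : 0 < αbar) (hρ : 0 < ρ) (hρ1 : ρ < 1)
    (hρbar : 0 < ρbar) (hρbar1 : ρbar < 1) (hd : 1 ≤ d)
    (h1 : (Qd - Qinf).PosSemidef)
    (h2 : ((α * ρ ^ (d - 1)) • Qinf - (Qd - Qinf)).PosSemidef)
    (h3 : (Qd - QML).PosSemidef)
    (h4 : ((αbar * ρbar ^ (d - 1)) • QML - (Qd - QML)).PosSemidef) :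
    ((Qinf - QML) - (-(α * ρ ^ (d - 1) / (1 + α * ρ ^ (d - 1)))) • QML).PosSemidef ∧
      ((αbar * ρbar ^ (d - 1)) • QML - (Qinf - QML)).PosSemidef :=
  stmt_4_general Qinf Qd QML α αbar ρ ρbar d hα hρ h1 h2 h3 h4
end

section
/- Let A(k) be a sequence of square matrices converging to a matrix A∞ whose spectral radius is strictly less than 1, and let b(k) be a bounded sequence of vectors converging to b∞. Then the sequence x(k+1) = A(k) x(k) + b(k), from any initial x(0), converges to (I - A∞)^{-1} b∞. -/
/-!
By Gelfand's formula, `ρ(A∞) < 1` yields a power with `‖A∞ ^ m‖ < 1` in the `ℓ∞`-operator norm.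
Then `Φ v = ∑_{k<m} ‖A∞ ^ k v‖` is a norm equivalent to `‖·‖` in which `A∞`, and therefore every
matrix close enough to it, is a strict contraction: `Φ (A∞ v) = Φ v - ‖v‖ + ‖A∞ ^ m v‖`.
With the fixed point `x∗ = A∞ x∗ + b∞`, the error `e k = x k - x∗` satisfies
`e (k+1) = A k (e k) + d k` where `d k → 0`, so eventually `Φ (e (k+1)) ≤ q Φ (e k) + K ‖d k‖`
with `q < 1`, which forces `Φ (e k) → 0`.
-/

open Matrix Filter Topology Finset

theorem tendsto_zero_of_eventually_le_mul_add {u w : ℕ → ℝ} {q : ℝ} (hq0 : 0 ≤ q) (hq1 : q < 1)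
    (hu : ∀ k, 0 ≤ u k) (hw : Tendsto w atTop (𝓝 0))
    (h : ∀ᶠ k in atTop, u (k + 1) ≤ q * u k + w k) : Tendsto u atTop (𝓝 0) := by
  refine tendsto_order.2 ⟨fun a ha => .of_forall fun k => ha.trans_le (hu k), fun ε hε => ?_⟩
  have hgap : 0 < (1 - q) * (ε / 2) := mul_pos (sub_pos.2 hq1) (half_pos hε)
  obtain ⟨N, hN⟩ := eventually_atTop.1 (h.and (hw.eventually (ge_mem_nhds hgap)))
  -- once `w ≤ (1 - q) ε / 2`, the shifted sequence `u - ε / 2` contracts by the factor `q`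
  have hgeom : ∀ t, u (N + t) - ε / 2 ≤ q ^ t * (u N - ε / 2) := by
    intro t
    induction t with
    | zero => simp
    | succ t ih =>
      obtain ⟨hstep, hsmall⟩ := hN (N + t) (Nat.le_add_right N t)
      rw [← add_assoc, pow_succ']
      nlinarith [mul_le_mul_of_nonneg_left ih hq0]
  have hlim : Tendsto (fun t => q ^ t * (u N - ε / 2)) atTop (𝓝 0) := by
    simpa using (tendsto_pow_atTop_nhds_zero_of_lt_one hq0 hq1).mul_const (u N - ε / 2)
  obtain ⟨T, hT⟩ := eventually_atTop.1 (hlim.eventually (gt_mem_nhds (half_pos hε)))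
  refine eventually_atTop.2 ⟨N + T, fun k hk => ?_⟩
  obtain ⟨t, rfl⟩ := Nat.exists_eq_add_of_le (le_trans (Nat.le_add_right N T) hk)
  linarith [hgeom t, hT t (by omega)]

theorem exists_pow_norm_lt_one_of_spectralRadius_lt_one {𝒜 : Type*} [NormedRing 𝒜]
    [NormedAlgebra ℂ 𝒜] [CompleteSpace 𝒜] {a : 𝒜} (h : spectralRadius ℂ a < 1) :
    ∃ m, 0 < m ∧ ‖a ^ m‖ < 1 := by
  obtain ⟨m, hroot, hm⟩ :=
    (((spectrum.pow_nnnorm_pow_one_div_tendsto_nhds_spectralRadius a).eventually_lt_const h).and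
      (eventually_gt_atTop 0)).exists
  refine ⟨m, hm, ?_⟩
  have : ‖a ^ m‖₊ < 1 := by
    by_contra! hge
    exact hroot.not_ge (ENNReal.one_le_rpow (by exact_mod_cast hge) (by positivity))
  exact_mod_cast this

namespace Matrix

open scoped Matrix.Norms.Operator

variable {ι 𝕜 : Type*} [Fintype ι] [DecidableEq ι]

theorem linfty_opNorm_map_ofReal (M : Matrix ι ι ℝ) : ‖M.map Complex.ofReal‖ = ‖M‖ := by
  simp [linfty_opNorm_def]

theorem exists_pow_linfty_opNorm_lt_one {B : Matrix ι ι ℝ}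
    (h : spectralRadius ℂ (B.map Complex.ofReal) < 1) : ∃ m, 0 < m ∧ ‖B ^ m‖ < 1 := by
  obtain ⟨m, hm, hlt⟩ := exists_pow_norm_lt_one_of_spectralRadius_lt_one h
  refine ⟨m, hm, ?_⟩
  rwa [← linfty_opNorm_map_ofReal, show (B ^ m).map Complex.ofReal = _ from
    Matrix.map_pow B Complex.ofRealHom m]

section Lyapunov

variable [NormedRing 𝕜]

def lyapunovNorm (B : Matrix ι ι 𝕜) (m : ℕ) (v : ι → 𝕜) : ℝ :=
  ∑ k ∈ range m, ‖B ^ k *ᵥ v‖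

variable {B : Matrix ι ι 𝕜} {m : ℕ}

theorem norm_le_lyapunovNorm (hm : 0 < m) (v : ι → 𝕜) : ‖v‖ ≤ lyapunovNorm B m v := by
  simpa [lyapunovNorm] using
    single_le_sum (f := fun k => ‖B ^ k *ᵥ v‖) (fun _ _ => norm_nonneg _) (mem_range.2 hm)

theorem lyapunovNorm_le (v : ι → 𝕜) :
    lyapunovNorm B m v ≤ (∑ k ∈ range m, ‖B ^ k‖) * ‖v‖ := by
  rw [lyapunovNorm, sum_mul]
  exact sum_le_sum fun k _ => linfty_opNorm_mulVec _ _

theorem lyapunovNorm_add_le (v w : ι → 𝕜) :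
    lyapunovNorm B m (v + w) ≤ lyapunovNorm B m v + lyapunovNorm B m w := by
  simp only [lyapunovNorm, ← sum_add_distrib, mulVec_add]
  exact sum_le_sum fun k _ => norm_add_le _ _

theorem lyapunovNorm_mulVec_add_norm (v : ι → 𝕜) :
    lyapunovNorm B m (B *ᵥ v) + ‖v‖ = lyapunovNorm B m v + ‖B ^ m *ᵥ v‖ := by
  simp only [lyapunovNorm, mulVec_mulVec, ← pow_succ]
  rw [← sum_range_succ (fun k => ‖B ^ k *ᵥ v‖), sum_range_succ', pow_zero, one_mulVec]

theorem lyapunovNorm_mulVec_add_le (M : Matrix ι ι 𝕜) (v d : ι → 𝕜) :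
    lyapunovNorm B m (M *ᵥ v + d) ≤ lyapunovNorm B m v
      - (1 - ‖B ^ m‖ - (∑ k ∈ range m, ‖B ^ k‖) * ‖M - B‖) * ‖v‖
      + (∑ k ∈ range m, ‖B ^ k‖) * ‖d‖ := by
  have hK : 0 ≤ ∑ k ∈ range m, ‖B ^ k‖ := sum_nonneg fun _ _ => norm_nonneg _
  have hsplit : M *ᵥ v + d = B *ᵥ v + ((M - B) *ᵥ v + d) := by rw [sub_mulVec]; abel
  have hBv := lyapunovNorm_mulVec_add_norm (B := B) (m := m) v
  have hBm := linfty_opNorm_mulVec (B ^ m) v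
  have hMB := (lyapunovNorm_le (B := B) (m := m) ((M - B) *ᵥ v)).trans
    (mul_le_mul_of_nonneg_left (linfty_opNorm_mulVec (M - B) v) hK)
  have hd := lyapunovNorm_le (B := B) (m := m) d
  rw [hsplit]
  linarith [lyapunovNorm_add_le (B := B) (m := m) (B *ᵥ v) ((M - B) *ᵥ v + d),
    lyapunovNorm_add_le (B := B) (m := m) ((M - B) *ᵥ v) d]

theorem exists_lyapunovNorm_contraction (hB : ‖B ^ m‖ < 1) :
    ∃ q, 0 ≤ q ∧ q < 1 ∧ ∃ δ > 0, ∀ (M : Matrix ι ι 𝕜) (v d : ι → 𝕜), ‖M - B‖ ≤ δ →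
      lyapunovNorm B m (M *ᵥ v + d) ≤ q * lyapunovNorm B m v + (∑ k ∈ range m, ‖B ^ k‖) * ‖d‖ := by
  set K := ∑ k ∈ range m, ‖B ^ k‖
  set c := 1 - ‖B ^ m‖
  have hK : 0 ≤ K := sum_nonneg fun _ _ => norm_nonneg _
  have hc : 0 < c := sub_pos.2 hB
  have hc1 : c ≤ 1 := sub_le_self _ (norm_nonneg _)
  set δ := c / (2 * (K + 1))
  have hδ : 0 < δ := by positivity
  have hKδ : K * δ ≤ c / 2 := by
    rw [mul_div_assoc', div_le_div_iff₀ (by positivity) two_pos]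
    nlinarith
  have hδ1 : δ ≤ 1 := by
    rw [div_le_one (by positivity)]
    linarith
  refine ⟨1 - δ, by linarith, by linarith, δ, hδ, fun M v d hM => ?_⟩
  -- the spectral gap `c`, reduced by at most `c / 2` by the perturbation, still dominates `δ K`
  have hgap : K * δ * ‖v‖ ≤ (c - K * ‖M - B‖) * ‖v‖ := by
    gcongr
    nlinarith [mul_le_mul_of_nonneg_left hM hK]
  have hΦ := mul_le_mul_of_nonneg_left (lyapunovNorm_le (B := B) (m := m) v) hδ.le
  nlinarith [lyapunovNorm_mulVec_add_le (B := B) (m := m) M v d]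

theorem tendsto_zero_of_perturbed_recursion (hm : 0 < m) (hB : ‖B ^ m‖ < 1)
    {M : ℕ → Matrix ι ι 𝕜} (hM : Tendsto M atTop (𝓝 B)) {d e : ℕ → ι → 𝕜}
    (hd : Tendsto d atTop (𝓝 0)) (he : ∀ k, e (k + 1) = M k *ᵥ e k + d k) :
    Tendsto e atTop (𝓝 0) := by
  obtain ⟨q, hq0, hq1, δ, hδ, hcontr⟩ := exists_lyapunovNorm_contraction hB
  have hclose : ∀ᶠ k in atTop, ‖M k - B‖ ≤ δ :=
    (tendsto_iff_norm_sub_tendsto_zero.1 hM).eventually (ge_mem_nhds hδ)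
  have hforcing : Tendsto (fun k => (∑ j ∈ range m, ‖B ^ j‖) * ‖d k‖) atTop (𝓝 0) := by
    simpa using hd.norm.const_mul (∑ j ∈ range m, ‖B ^ j‖)
  have hΦ : Tendsto (fun k => lyapunovNorm B m (e k)) atTop (𝓝 0) :=
    tendsto_zero_of_eventually_le_mul_add hq0 hq1
      (fun k => (norm_nonneg _).trans (norm_le_lyapunovNorm hm _)) hforcing
      (hclose.mono fun k hk => (he k).symm ▸ hcontr (M k) (e k) (d k) hk)
  exact squeeze_zero_norm (fun k => norm_le_lyapunovNorm hm (e k)) hΦ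

end Lyapunov

variable [NormedField 𝕜] {B : Matrix ι ι 𝕜} {m : ℕ}

theorem isUnit_one_sub_of_norm_pow_lt_one (hB : ‖B ^ m‖ < 1) : IsUnit (1 - B) := by
  rw [← mulVec_injective_iff_isUnit]
  intro v w hvw
  have hfix : (1 - B) *ᵥ (v - w) = 0 := by rw [mulVec_sub, hvw, sub_self]
  rw [sub_mulVec, one_mulVec, sub_eq_zero] at hfix
  have hpow : ∀ j, B ^ j *ᵥ (v - w) = v - w := fun j => by
    induction j with
    | zero => simp
    | succ j ih => rw [pow_succ', ← mulVec_mulVec, ih, ← hfix]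
  have hle := linfty_opNorm_mulVec (B ^ m) (v - w)
  rw [hpow] at hle
  have : ‖v - w‖ ≤ 0 := by nlinarith [norm_nonneg (v - w)]
  exact sub_eq_zero.1 (norm_le_zero_iff.1 this)

theorem mulVec_nonsing_inv_one_sub_mulVec_add (h : IsUnit (1 - B)) (c : ι → 𝕜) :
    B *ᵥ ((1 - B)⁻¹ *ᵥ c) + c = (1 - B)⁻¹ *ᵥ c := by
  have hinv : (1 - B) *ᵥ ((1 - B)⁻¹ *ᵥ c) = c := by
    rw [mulVec_mulVec, mul_nonsing_inv _ ((isUnit_iff_isUnit_det _).1 h), one_mulVec]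
  rw [sub_mulVec, one_mulVec, sub_eq_iff_eq_add'] at hinv
  exact hinv.symm

theorem tendsto_of_recursion_mulVec_add (hm : 0 < m) (hB : ‖B ^ m‖ < 1)
    {M : ℕ → Matrix ι ι 𝕜} (hM : Tendsto M atTop (𝓝 B)) {c : ℕ → ι → 𝕜} {c' : ι → 𝕜}
    (hc : Tendsto c atTop (𝓝 c')) {x : ℕ → ι → 𝕜} (hx : ∀ k, x (k + 1) = M k *ᵥ x k + c k) :
    Tendsto x atTop (𝓝 ((1 - B)⁻¹ *ᵥ c')) := by
  set xs := (1 - B)⁻¹ *ᵥ c'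
  have hfix : B *ᵥ xs + c' = xs :=
    mulVec_nonsing_inv_one_sub_mulVec_add (isUnit_one_sub_of_norm_pow_lt_one hB) c'
  have hforcing : Tendsto (fun k => M k *ᵥ xs + c k - (B *ᵥ xs + c')) atTop (𝓝 0) :=
    tendsto_sub_nhds_zero_iff.2
      ((((continuous_id.matrix_mulVec continuous_const).tendsto B).comp hM).add hc)
  refine tendsto_sub_nhds_zero_iff.1 (tendsto_zero_of_perturbed_recursion hm hB hM hforcing
    fun k => ?_)
  rw [hx, mulVec_sub, hfix]
  abel

end Matrix

theorem stmt_5_general {n : ℕ} (A : ℕ → Matrix (Fin n) (Fin n) ℝ)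
    (Ainf : Matrix (Fin n) (Fin n) ℝ)
    (b : ℕ → (Fin n → ℝ)) (binf : Fin n → ℝ) (x : ℕ → (Fin n → ℝ))
    (hA : Tendsto A atTop (nhds Ainf))
    (hρ : spectralRadius ℂ (Ainf.map (Complex.ofReal)) < 1)
    (hb : Tendsto b atTop (nhds binf))
    (hx : ∀ k, x (k + 1) = A k *ᵥ x k + b k) :
    Tendsto x atTop (nhds ((1 - Ainf)⁻¹ *ᵥ binf)) := by
  obtain ⟨m, hm, hAm⟩ := Matrix.exists_pow_linfty_opNorm_lt_one hρ
  exact Matrix.tendsto_of_recursion_mulVec_add hm hAm hA hb hx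

/-- If `A(k) → A∞` with spectral radius of `A∞` less than one, and `b(k)` is
bounded with `b(k) → b∞`, then `x(k+1) = A(k) x(k) + b(k)` converges to
`(I - A∞)⁻¹ b∞` from any initial condition. -/
theorem stmt_5 {n : ℕ} (A : ℕ → Matrix (Fin n) (Fin n) ℝ)
    (Ainf : Matrix (Fin n) (Fin n) ℝ)
    (b : ℕ → (Fin n → ℝ)) (binf : Fin n → ℝ) (x : ℕ → (Fin n → ℝ))
    (hA : Tendsto A atTop (nhds Ainf))
    (hρ : spectralRadius ℂ (Ainf.map (Complex.ofReal)) < 1)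
    (hb : Tendsto b atTop (nhds binf))
    (hbdd : ∃ M : ℝ, ∀ k, ‖b k‖ ≤ M)
    (hx : ∀ k, x (k + 1) = A k *ᵥ x k + b k) :
    Tendsto x atTop (nhds ((1 - Ainf)⁻¹ *ᵥ binf)) :=
  stmt_5_general A Ainf b binf x hA hρ hb hx
end
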